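/- arXiv:1202.4183 — 4 statements merged into one kernel-verified Lean document; each statement's English description precedes it below -/
import Mathlib

section
/- Let p be a prime and d a positive integer not divisible by p. Then the number of pairs (b, r) of integers with b ≥ 1, r ≥ 0, and r·d + b·p ≤ (p−1)(d+1) equals (d+1)(p−1)/2. -/
/-!
For `0 ≤ r ≤ p - 2` the admissible `b` are `1, …, ⌊(N - r d)/p⌋` with `N = (p-1)(d+1)`, and no
other `r` occurs. Writing `N - r d = k d + (p - 1)` with `k = p - 1 - r`, the reflection
`r ↦ p - 2 - r` replaces `k` by `p - k`; since `p ∤ k d`, the two fibre sizes add up to `d + 1`.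
So twice the count is `(p - 1)(d + 1)`.
-/

open Finset

theorem not_dvd_mul_of_pos_of_lt {p k d : ℤ} (hp : Prime p) (hpd : ¬ p ∣ d) (hk : 0 < k)
    (hkp : k < p) : ¬ p ∣ k * d := fun h =>
  (hp.dvd_or_dvd h).elim (fun hpk => (Int.le_of_dvd hk hpk).not_gt hkp) hpd

/-- The remainders of `a + p - 1` and `b + p - 1` mod `p` are `a % p - 1` and `p - 1 - a % p`. -/
theorem add_pred_ediv_add_add_pred_ediv {p a b c : ℤ} (hp : 0 < p) (ha : ¬ p ∣ a)
    (hab : a + b = p * c) : (a + p - 1) / p + (b + p - 1) / p = c + 1 := by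
  have hpos : 0 < a % p := (Int.emod_pos_of_not_dvd ha).resolve_left hp.ne'
  have hlt : a % p < p := Int.emod_lt_of_pos a hp
  have hdiv := Int.emod_add_mul_ediv a p
  have ha' : (a + p - 1) / p = a / p + 1 :=
    ((Int.ediv_emod_unique (r := a % p - 1) hp).2
      ⟨by linear_combination hdiv, by omega, by omega⟩).1
  have hb' : (b + p - 1) / p = c - a / p :=
    ((Int.ediv_emod_unique (r := p - 1 - a % p) hp).2
      ⟨by linear_combination -hdiv - hab, by omega, by omega⟩).1
  rw [ha', hb']
  ring

theorem sum_Icc_reflect {M : Type*} [AddCommMonoid M] (f : ℤ → M) (n : ℤ) :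
    ∑ r ∈ Icc 0 n, f (n - r) = ∑ r ∈ Icc 0 n, f r :=
  sum_nbij' (n - ·) (n - ·) (by intro r; simp only [mem_Icc]; omega)
    (by intro r; simp only [mem_Icc]; omega) (by intro r _; ring) (by intro r _; ring)
    (fun _ _ => rfl)

theorem two_mul_sum_Icc_of_add_reflect_eq {f : ℤ → ℤ} {n c : ℤ} (hn : 0 ≤ n)
    (h : ∀ r ∈ Icc 0 n, f r + f (n - r) = c) : 2 * ∑ r ∈ Icc 0 n, f r = (n + 1) * c := by
  calc 2 * ∑ r ∈ Icc 0 n, f r = ∑ r ∈ Icc 0 n, (f r + f (n - r)) := by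
        rw [sum_add_distrib, sum_Icc_reflect, two_mul]
    _ = (n + 1) * c := by
        rw [sum_congr rfl h, sum_const, Int.card_Icc, sub_zero, nsmul_eq_mul,
          Int.toNat_of_nonneg (by omega)]

theorem natCard_lattice_triangle {p d : ℤ} (hp : 0 < p) (hd : 0 < d) (N : ℤ) :
    (Nat.card {x : ℤ × ℤ | 1 ≤ x.1 ∧ 0 ≤ x.2 ∧ x.2 * d + x.1 * p ≤ N} : ℤ) =
      ∑ r ∈ Icc 0 ((N - p) / d), (N - r * d) / p := by
  have hS : {x : ℤ × ℤ | 1 ≤ x.1 ∧ 0 ≤ x.2 ∧ x.2 * d + x.1 * p ≤ N} =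
      ↑((Icc 0 ((N - p) / d)).biUnion fun r => Icc 1 ((N - r * d) / p) ×ˢ {r}) := by
    ext ⟨b, r⟩
    simp only [Set.mem_ofPred_eq, coe_biUnion, Set.mem_iUnion, mem_coe, mem_product, mem_Icc,
      mem_singleton, Int.le_ediv_iff_mul_le hp, Int.le_ediv_iff_mul_le hd, exists_prop]
    constructor
    · rintro ⟨hb, hr, h⟩
      have : p ≤ b * p := le_mul_of_one_le_left hp.le hb
      exact ⟨r, ⟨hr, by linarith⟩, ⟨hb, by linarith⟩, rfl⟩
    · rintro ⟨r, ⟨hr, -⟩, ⟨hb, h⟩, rfl⟩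
      exact ⟨hb, hr, by linarith⟩
  have hdisj : (↑(Icc 0 ((N - p) / d)) : Set ℤ).PairwiseDisjoint
      fun r => Icc 1 ((N - r * d) / p) ×ˢ {r} := fun r _ r' _ hne =>
    disjoint_product.2 (Or.inr (disjoint_singleton.2 hne))
  rw [hS, Nat.card_coe_set_eq, Set.ncard_coe_finset, card_biUnion hdisj]
  push_cast
  refine sum_congr rfl fun r hr => ?_
  rw [mem_Icc, Int.le_ediv_iff_mul_le hd] at hr
  rw [card_product, card_singleton, mul_one, Int.card_Icc, add_sub_cancel_right,
    Int.toNat_of_nonneg (Int.ediv_nonneg (by linarith) hp.le)]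

theorem stmt_5_general (p d : ℕ) (hp : p.Prime) (hpd : ¬ (p ∣ d)) :
    Nat.card {x : ℤ × ℤ | 1 ≤ x.1 ∧ 0 ≤ x.2 ∧
      x.2 * d + x.1 * p ≤ ((p : ℤ) - 1) * ((d : ℤ) + 1)} =
      (d + 1) * (p - 1) / 2 := by
  have hp2 := hp.two_le
  have hd : 0 < d := Nat.pos_of_ne_zero (by rintro rfl; exact hpd (dvd_zero p))
  have hpd' : ¬ (p : ℤ) ∣ d := by exact_mod_cast hpd
  have hR : (((p : ℤ) - 1) * ((d : ℤ) + 1) - p) / d = p - 2 :=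
    ((Int.ediv_emod_unique (r := (d : ℤ) - 1) (by omega)).2 ⟨by ring, by omega, by omega⟩).1
  have hpair : ∀ r ∈ Icc (0 : ℤ) (p - 2),
      (((p : ℤ) - 1) * ((d : ℤ) + 1) - r * d) / p +
        (((p : ℤ) - 1) * ((d : ℤ) + 1) - (p - 2 - r) * d) / p = d + 1 := by
    intro r hr
    rw [mem_Icc] at hr
    have := add_pred_ediv_add_add_pred_ediv (a := (p - 1 - r) * d) (b := (r + 1) * d) (c := d)
      (by omega) (not_dvd_mul_of_pos_of_lt (Nat.prime_iff_prime_int.mp hp) hpd' (by omega)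
        (by omega)) (by ring)
    convert this using 3 <;> ring
  have hcard := natCard_lattice_triangle (p := p) (d := d) (by omega) (by omega)
    (((p : ℤ) - 1) * ((d : ℤ) + 1))
  rw [hR] at hcard
  have hcount := two_mul_sum_Icc_of_add_reflect_eq (by omega) hpair
  rw [← hcard] at hcount
  refine (Nat.div_eq_of_eq_mul_left two_pos ?_).symm
  zify [hp.one_le]
  linarith

/-- The number of pairs `(b, r)` of integers with `b ≥ 1`, `r ≥ 0` and
`r·d + b·p ≤ (p−1)(d+1)` equals `(d+1)(p−1)/2`. -/
theorem stmt_5 (p d : ℕ) (hp : p.Prime) (hd : 0 < d) (hpd : ¬ (p ∣ d)) :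
    Nat.card {x : ℤ × ℤ | 1 ≤ x.1 ∧ 0 ≤ x.2 ∧
      x.2 * d + x.1 * p ≤ ((p : ℤ) - 1) * ((d : ℤ) + 1)} =
      (d + 1) * (p - 1) / 2 :=
  stmt_5_general p d hp hpd
end

section
/- Let p be a prime and d a positive integer dividing p−1. Then the number of pairs (b, r) of nonnegative integers satisfying both r·d + b·p ≤ (p−1)(d−1) − 2 and r·d < (b+1)(p−1) equals (p−1)·d/4 if d is even, and equals (p−1)(d−1)(d+1)/(4d) if d is odd. -/
/-! Write `p = γ d + 1`. For fixed `b` the two inequalities hold exactly when `b ≤ d - 2`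
and `r < γ · min (b + 1, d - 1 - b)`, so the count is
`γ · ∑_{b < d - 1} min (b + 1, d - 1 - b)`, and this tent-shaped sum is `⌊d² / 4⌋`. -/

open Finset

theorem card_setOf_nonneg_nonneg (P : ℤ × ℤ → Prop) :
    Nat.card {x : ℤ × ℤ | 0 ≤ x.1 ∧ 0 ≤ x.2 ∧ P x} =
      Nat.card {y : ℕ × ℕ | P (y.1, y.2)} := by
  have : {x : ℤ × ℤ | 0 ≤ x.1 ∧ 0 ≤ x.2 ∧ P x} =
      (fun y : ℕ × ℕ => ((y.1 : ℤ), (y.2 : ℤ))) '' {y | P (y.1, y.2)} := by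
    ext ⟨a, c⟩
    constructor
    · rintro ⟨ha, hc, h⟩
      lift a to ℕ using ha
      lift c to ℕ using hc
      exact ⟨(a, c), h, rfl⟩
    · rintro ⟨⟨b, r⟩, h, hbr⟩
      obtain ⟨rfl, rfl⟩ := Prod.ext_iff.mp hbr
      exact ⟨b.cast_nonneg, r.cast_nonneg, h⟩
  rw [this, Nat.card_image_of_injective]
  intro y y' h
  simpa [Prod.ext_iff] using h

theorem card_setOf_lt_and_lt (n : ℕ) (f : ℕ → ℕ) :
    Nat.card {y : ℕ × ℕ | y.1 < n ∧ y.2 < f y.1} = ∑ b ∈ range n, f b := by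
  have : {y : ℕ × ℕ | y.1 < n ∧ y.2 < f y.1} =
      ((range n).sigma fun b => range (f b)).map (Equiv.sigmaEquivProd ℕ ℕ).toEmbedding := by
    ext ⟨b, r⟩
    simp
  rw [this, Nat.card_coe_set_eq, Set.ncard_coe_finset, card_map, card_sigma]
  simp only [card_range]

theorem aInfty_conditions_iff {γ d p b r : ℤ} (hp : p = γ * d + 1) (hγ : 0 ≤ γ)
    (hd : 0 < d) (hb : 0 ≤ b) (hr : 0 ≤ r) :
    r * d + b * p ≤ (p - 1) * (d - 1) - 2 ∧ r * d < (b + 1) * (p - 1) ↔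
      b + 2 ≤ d ∧ r < γ * (b + 1) ∧ r < γ * (d - 1 - b) := by
  subst hp
  constructor
  · rintro ⟨h1, h2⟩
    have hr2 : r < γ * (d - 1 - b) := by
      have : 0 < (γ * (d - 1 - b) - r) * d := by linarith
      linarith [pos_of_mul_pos_left this hd.le]
    have hbd : 0 < d - 1 - b := pos_of_mul_pos_right (hr.trans_lt hr2) hγ
    exact ⟨by omega, lt_of_mul_lt_mul_right (by linarith) hd.le, hr2⟩
  · rintro ⟨hbd, hr1, hr2⟩
    constructor
    · nlinarith
    · nlinarith

theorem aInfty_conditions_iff_nat {γ d p b r : ℕ} (hp : p = γ * d + 1) (hd : 0 < d) :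
    (r : ℤ) * d + b * p ≤ ((p : ℤ) - 1) * ((d : ℤ) - 1) - 2 ∧
        (r : ℤ) * d < (b + 1) * ((p : ℤ) - 1) ↔
      b < d - 1 ∧ r < γ * min (b + 1) (d - 1 - b) := by
  rw [aInfty_conditions_iff (γ := γ) (by exact_mod_cast hp) (by positivity) (by exact_mod_cast hd)
      (by positivity) (by positivity), ← Nat.mul_min_mul_left, lt_min_iff]
  by_cases hb : b < d - 1
  · have hcast : ((d - 1 - b : ℕ) : ℤ) = d - 1 - b := by omega
    rw [← hcast]
    norm_cast
    simp only [hb, true_and, show b + 2 ≤ d by omega]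
  · have : ¬ (b : ℤ) + 2 ≤ d := by omega
    simp only [hb, this, false_and]

theorem sum_range_min_add_one_sub (n : ℕ) :
    ∑ b ∈ range n, min (b + 1) (n - b) = (n + 1) ^ 2 / 4 := by
  induction n using Nat.twoStepInduction with
  | zero => rfl
  | one => rfl
  | more n ih _ =>
    have inner : ∀ b ∈ range n,
        min (b + 1 + 1) (n + 2 - (b + 1)) = min (b + 1) (n - b) + 1 := by
      intro b hb
      rw [mem_range] at hb
      omega
    rw [sum_range_succ, sum_range_succ', sum_congr rfl inner, sum_add_distrib, ih,
      show (n + 2 + 1) ^ 2 = (n + 1) ^ 2 + 4 * (n + 2) by ring, Nat.add_mul_div_left _ _ four_pos]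
    simp only [sum_const, card_range, smul_eq_mul, mul_one]
    omega

theorem mul_sq_div_four_eq_ite (γ d : ℕ) (hd : 0 < d) :
    γ * (d ^ 2 / 4) =
      if Even d then d * γ * d / 4 else d * γ * (d - 1) * (d + 1) / (4 * d) := by
  rcases Nat.even_or_odd' d with ⟨k, rfl | rfl⟩
  · rw [if_pos (even_two_mul k), show 2 * k * γ * (2 * k) = 4 * (γ * k ^ 2) by ring,
      show (2 * k) ^ 2 = 4 * k ^ 2 by ring, Nat.mul_div_cancel_left _ four_pos,
      Nat.mul_div_cancel_left _ four_pos]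
  · rw [if_neg (Nat.not_even_iff_odd.mpr (odd_two_mul_add_one k)),
      show (2 * k + 1) ^ 2 = 1 + 4 * (k * (k + 1)) by ring, Nat.add_mul_div_left _ _ four_pos,
      show (2 * k + 1) * γ * (2 * k + 1 - 1) * (2 * k + 1 + 1) =
        γ * (k * (k + 1)) * (4 * (2 * k + 1)) by rw [Nat.add_sub_cancel]; ring,
      Nat.mul_div_cancel _ (by positivity)]
    simp

theorem stmt_8_general (p d : ℕ) (hdvd : d ∣ p - 1) :
    Nat.card {x : ℤ × ℤ | 0 ≤ x.1 ∧ 0 ≤ x.2 ∧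
        x.2 * d + x.1 * p ≤ ((p : ℤ) - 1) * ((d : ℤ) - 1) - 2 ∧
        x.2 * d < (x.1 + 1) * ((p : ℤ) - 1)} =
      if Even d then (p - 1) * d / 4 else (p - 1) * (d - 1) * (d + 1) / (4 * d) := by
  rcases Nat.lt_or_ge p 2 with hp | hp
  · rw [show p - 1 = 0 by omega]
    simp only [zero_mul, Nat.zero_div, ite_self]
    refine Nat.card_eq_zero.mpr (.inl ⟨fun ⟨⟨b, r⟩, hb, hr, h, _⟩ => ?_⟩)
    interval_cases p <;> push_cast at h <;> nlinarith
  obtain ⟨γ, hγ⟩ := hdvd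
  have hd : 0 < d := Nat.pos_of_ne_zero fun h => by subst h; omega
  have hpγ : p = γ * d + 1 := by rw [mul_comm]; omega
  rw [card_setOf_nonneg_nonneg, Set.ext fun y => aInfty_conditions_iff_nat hpγ hd,
    card_setOf_lt_and_lt (d - 1) fun b => γ * min (b + 1) (d - 1 - b), ← mul_sum,
    sum_range_min_add_one_sub, Nat.sub_add_cancel hd, hγ]
  exact mul_sq_div_four_eq_ite γ d hd

/-- The number of pairs `(b, r)` of nonnegative integers with
`r·d + b·p ≤ (p−1)(d−1) − 2` and `r·d < (b+1)(p−1)` equals `(p−1)d/4` if `d` is even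
and `(p−1)(d−1)(d+1)/(4d)` if `d` is odd. -/
theorem stmt_8 (p d : ℕ) (hp : p.Prime) (hd : 0 < d) (hdvd : d ∣ p - 1) :
    Nat.card {x : ℤ × ℤ | 0 ≤ x.1 ∧ 0 ≤ x.2 ∧
        x.2 * d + x.1 * p ≤ ((p : ℤ) - 1) * ((d : ℤ) - 1) - 2 ∧
        x.2 * d < (x.1 + 1) * ((p : ℤ) - 1)} =
      if Even d then (p - 1) * d / 4 else (p - 1) * (d - 1) * (d + 1) / (4 * d) :=
  stmt_8_general p d hdvd
end

section
/- Let p be a prime and d a positive integer dividing p−1. Then the number of pairs (b, r) of integers with b ≥ 1, r ≥ 0 satisfying both r·d + b·p ≤ (p−1)(d+1) and r·d < (b−1)(p−1) equals (p−1)·d/4 if d is even, and equals (p−1)(d−1)(d+1)/(4d) if d is odd. -/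
/-!
With `p - 1 = d * γ`, the two inequalities say exactly that `1 ≤ b ≤ d` and
`0 ≤ r < γ * min (b - 1) (d + 1 - b)`: the pairs are the lattice points under a tent.
Counting column by column gives `γ * ∑_{m < d} min m (d - m) = γ * ⌊d² / 4⌋`,
which is the stated formula in either parity of `d`.
-/

open Finset

theorem sum_range_min_sub (n : ℕ) : ∑ m ∈ range n, min m (n - m) = n * n / 4 := by
  induction n using Nat.strong_induction_on with
  | _ n ih =>
    match n with
    | 0 | 1 => simp
    | n + 2 =>
      -- without its end terms, the sum for `n + 2` is the sum for `n` shifted up by one per term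
      have hinner : ∑ m ∈ range n, min (m + 1) (n + 2 - (m + 1)) =
          ∑ m ∈ range n, (min m (n - m) + 1) :=
        sum_congr rfl fun m hm => by have := mem_range.1 hm; omega
      have hpeel : ∑ m ∈ range (n + 2), min m (n + 2 - m) =
          ∑ m ∈ range n, min m (n - m) + (n + 1) := by
        rw [sum_range_succ', sum_range_succ, hinner, sum_add_distrib, sum_const, card_range]
        simp only [smul_eq_mul, mul_one]
        omega
      have hsq : (n + 2) * (n + 2) = n * n + 4 * (n + 1) := by ring
      rw [hpeel, ih n (by omega)]
      omega

theorem mul_mul_self_div_four_eq {d : ℕ} (hd : 0 < d) (γ : ℕ) :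
    γ * (d * d / 4) =
      if Even d then d * γ * d / 4 else d * γ * (d - 1) * (d + 1) / (4 * d) := by
  split_ifs with hev
  · obtain ⟨k, rfl⟩ := hev
    rw [show (k + k) * (k + k) = 4 * (k * k) by ring,
      show (k + k) * γ * (k + k) = 4 * (k * k * γ) by ring,
      Nat.mul_div_cancel_left _ four_pos, Nat.mul_div_cancel_left _ four_pos]
    ring
  · obtain ⟨k, rfl⟩ := Nat.not_even_iff_odd.1 hev
    have hsq : (2 * k + 1) * (2 * k + 1) = 4 * (k * k + k) + 1 := by ring
    rw [show (2 * k + 1) * (2 * k + 1) / 4 = k * k + k by omega,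
      show (2 * k + 1) * γ * (2 * k + 1 - 1) * (2 * k + 1 + 1) =
          4 * (2 * k + 1) * (γ * (k * k + k)) by rw [Nat.add_sub_cancel]; ring,
      Nat.mul_div_cancel_left _ (by omega)]

noncomputable def tentRegion (d γ : ℕ) : Finset (ℤ × ℤ) :=
  (Icc 1 (d : ℤ)).biUnion fun b =>
    (Ico 0 ((γ : ℤ) * min (b - 1) ((d : ℤ) + 1 - b))).map
      ⟨Prod.mk b, Prod.mk_right_injective b⟩

theorem mem_tentRegion {d γ : ℕ} {x : ℤ × ℤ} :
    x ∈ tentRegion d γ ↔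
      1 ≤ x.1 ∧ x.1 ≤ d ∧ 0 ≤ x.2 ∧ x.2 < γ * min (x.1 - 1) (d + 1 - x.1) := by
  obtain ⟨b, r⟩ := x
  simp [tentRegion, and_assoc]

theorem card_tentRegion (d γ : ℕ) : #(tentRegion d γ) = γ * (d * d / 4) := by
  have hIcc : Icc 1 (d : ℤ) = (range d).image fun m : ℕ => (m : ℤ) + 1 := by
    ext b
    simp only [mem_Icc, mem_image, mem_range]
    exact ⟨fun h => ⟨(b - 1).toNat, by omega, by omega⟩, by rintro ⟨m, hm, rfl⟩; omega⟩
  rw [tentRegion, card_biUnion, hIcc, sum_image (fun m _ m' _ h => by simpa using h),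
    ← sum_range_min_sub, mul_sum]
  · refine sum_congr rfl fun m hm => ?_
    have hmd : m ≤ d := (mem_range.1 hm).le
    rw [card_map, Int.card_Ico, sub_zero, add_sub_cancel_right,
      show (d : ℤ) + 1 - (m + 1) = ((d - m : ℕ) : ℤ) by omega,
      ← Nat.cast_min, ← Nat.cast_mul, Int.toNat_natCast]
  · intro b _ c _ hbc
    simp only [Function.onFun, disjoint_left, mem_map, Function.Embedding.coeFn_mk]
    rintro _ ⟨r, -, rfl⟩ ⟨s, -, hs⟩
    exact hbc (Prod.ext_iff.1 hs).1.symm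

theorem mem_tentRegion_iff {d γ : ℕ} (hd : 0 < d) {x : ℤ × ℤ} :
    x ∈ tentRegion d γ ↔ 1 ≤ x.1 ∧ 0 ≤ x.2 ∧
      x.2 * d + x.1 * (d * γ + 1) ≤ d * γ * (d + 1) ∧ x.2 * d < (x.1 - 1) * (d * γ) := by
  obtain ⟨b, r⟩ := x
  have hd' : (0 : ℤ) < d := by exact_mod_cast hd
  rw [mem_tentRegion, mul_min_of_nonneg _ _ (Int.natCast_nonneg γ), lt_min_iff]
  constructor
  · rintro ⟨hb, hbd, hr, hrow, hcol⟩
    refine ⟨hb, hr, ?_, ?_⟩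
    · nlinarith
    · nlinarith
  · rintro ⟨hb, hr, hcol, hrow⟩
    have hbd : b ≤ d := by
      by_contra! hdb
      nlinarith [mul_nonneg hr hd'.le,
        mul_nonneg (sub_nonneg.2 hdb) (by positivity : (0 : ℤ) ≤ d * γ)]
    refine ⟨hb, hbd, hr, ?_, ?_⟩
    · nlinarith
    · nlinarith

/-- The number of pairs `(b, r)` of integers with `b ≥ 1`, `r ≥ 0`,
`r·d + b·p ≤ (p−1)(d+1)` and `r·d < (b−1)(p−1)` equals `(p−1)d/4` if `d` is even
and `(p−1)(d−1)(d+1)/(4d)` if `d` is odd. -/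
theorem stmt_9 (p d : ℕ) (hp : p.Prime) (hd : 0 < d) (hdvd : d ∣ p - 1) :
    Nat.card {x : ℤ × ℤ | 1 ≤ x.1 ∧ 0 ≤ x.2 ∧
        x.2 * d + x.1 * p ≤ ((p : ℤ) - 1) * ((d : ℤ) + 1) ∧
        x.2 * d < (x.1 - 1) * ((p : ℤ) - 1)} =
      if Even d then (p - 1) * d / 4 else (p - 1) * (d - 1) * (d + 1) / (4 * d) := by
  obtain ⟨γ, hγ⟩ := hdvd
  obtain rfl : p = d * γ + 1 := by have := hp.pos; omega
  rw [Nat.add_sub_cancel, ← mul_mul_self_div_four_eq hd, ← card_tentRegion,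
    ← Nat.card_eq_finsetCard]
  congr
  ext x
  rw [mem_val, mem_tentRegion_iff hd]
  push_cast
  simp only [add_sub_cancel_right]
end

section
/- Let p be a prime and d a positive integer dividing p−1. Then the number of pairs (b, r) of integers with b ≥ 1, r ≥ 0 satisfying both r·d + b·p ≤ (p−1)(d+1) and r·d ≥ (b−1)(p−1) equals (p−1)(d+2)/4 if d is even, and equals (p−1)(d+1)²/(4d) if d is odd. -/
/-!
Write `p - 1 = d γ`. Dividing by `d`, the condition `(b - 1)(p - 1) ≤ r d` becomes
`(b - 1) γ ≤ r`, and since `r d` and `(p - 1)(d + 1) - b (p - 1)` are multiples of `d` while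
`1 ≤ b ≤ d`, the condition `r d + b p ≤ (p - 1)(d + 1)` becomes `r < (d + 1 - b) γ`. So row `b`
holds `(d + 2 - 2b) γ` points for `b ≤ m := ⌈d / 2⌉` and none after, for a total of
`m (d + 1 - m) γ`.
-/

open Finset

lemma sum_range_sub_two_mul (m : ℕ) (d : ℤ) :
    ∑ i ∈ range m, (d - 2 * i) = m * (d + 1 - m) := by
  induction m with
  | zero => simp
  | succ n ih => rw [sum_range_succ, ih]; push_cast; ring

/-- The paper's `H_fin` in the coordinates `(b, r)`, after substituting `p - 1 = d γ`. -/
def Hfin (γ d : ℕ) : Set (ℤ × ℤ) :=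
  {x | 1 ≤ x.1 ∧ (x.1 - 1) * γ ≤ x.2 ∧ x.2 < (d + 1 - x.1) * γ}

lemma mem_Hfin_iff {γ d : ℕ} (hd : 0 < d) {p b r : ℤ} (hp : p = d * γ + 1) :
    (b, r) ∈ Hfin γ d ↔
      1 ≤ b ∧ 0 ≤ r ∧ r * d + b * p ≤ (p - 1) * (d + 1) ∧ (b - 1) * (p - 1) ≤ r * d := by
  subst hp
  have hdZ : (0 : ℤ) < d := by exact_mod_cast hd
  have hγZ : (0 : ℤ) ≤ γ := by positivity
  simp only [Hfin, Set.mem_ofPred_eq]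
  constructor
  · rintro ⟨hb, hlo, hhi⟩
    have hb_le : 2 * b ≤ d + 1 := by
      have := lt_of_mul_lt_mul_right (hlo.trans_lt hhi) hγZ
      omega
    have hr_succ : (r + 1) * d ≤ (d + 1 - b) * γ * d :=
      mul_le_mul_of_nonneg_right (by omega) hdZ.le
    refine ⟨hb, by nlinarith, by nlinarith, ?_⟩
    calc (b - 1) * (d * γ + 1 - 1) = (b - 1) * γ * d := by ring
      _ ≤ r * d := mul_le_mul_of_nonneg_right hlo hdZ.le
  · rintro ⟨hb, hr, hup, hlow⟩
    refine ⟨hb, le_of_mul_le_mul_right (by linarith) hdZ, ?_⟩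
    refine lt_of_mul_lt_mul_right (a := (d : ℤ)) ?_ hdZ.le
    nlinarith

lemma card_Hfin (γ d : ℕ) :
    Nat.card (Hfin γ d) = (d + 1) / 2 * (d + 1 - (d + 1) / 2) * γ := by
  set m := (d + 1) / 2
  let row : ℕ → Finset (ℤ × ℤ) := fun i => {((i : ℤ) + 1)} ×ˢ Ico (i * γ : ℤ) ((d - i) * γ)
  have hrows : Hfin γ d = ↑((range m).biUnion row) := by
    ext ⟨b, r⟩
    simp only [Hfin, row, Set.mem_ofPred_eq, coe_biUnion, coe_range, Set.mem_iUnion,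
      Set.mem_Iio, mem_coe, mem_product, mem_singleton, mem_Ico, exists_prop]
    constructor
    · rintro ⟨hb, hlo, hhi⟩
      have := lt_of_mul_lt_mul_right (hlo.trans_lt hhi) (Int.natCast_nonneg γ)
      refine ⟨(b - 1).toNat, by omega, by omega, ?_⟩
      rw [Int.toNat_of_nonneg (by omega)]
      exact ⟨hlo, by linarith⟩
    · rintro ⟨i, hi, rfl, hlo, hhi⟩
      exact ⟨by omega, by simpa using hlo, by linarith⟩
  have hdisj : (range m : Set ℕ).PairwiseDisjoint row := by
    intro i _ j _ hij
    simp only [Function.onFun, row, disjoint_left, mem_product, mem_singleton]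
    rintro x ⟨hi, -⟩ ⟨hj, -⟩
    omega
  have hrow (i : ℕ) (hi : i ∈ range m) : ((#(row i) : ℕ) : ℤ) = (d - 2 * i) * γ := by
    have : 2 * i ≤ d := by have := mem_range.mp hi; omega
    simp only [row, card_product, card_singleton, one_mul, Int.card_Ico]
    rw [Int.toNat_of_nonneg (by nlinarith)]
    ring
  rw [hrows, Nat.card_coe_set_eq, Set.ncard_coe_finset, card_biUnion hdisj]
  zify [show m ≤ d + 1 by omega]
  rw [sum_congr rfl hrow, ← sum_mul, sum_range_sub_two_mul]

lemma half_mul_sub_half_mul_eq (d γ : ℕ) (hd : 0 < d) :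
    (d + 1) / 2 * (d + 1 - (d + 1) / 2) * γ =
      if Even d then d * γ * (d + 2) / 4 else d * γ * (d + 1) ^ 2 / (4 * d) := by
  rcases Nat.even_or_odd' d with ⟨k, rfl | rfl⟩
  · rw [if_pos (even_two_mul k), show (2 * k + 1) / 2 = k by omega,
      show 2 * k + 1 - k = k + 1 by omega]
    symm
    apply Nat.div_eq_of_eq_mul_left (by norm_num)
    ring
  · rw [if_neg (Nat.not_even_iff_odd.mpr (odd_two_mul_add_one k)),
      show (2 * k + 1 + 1) / 2 = k + 1 by omega, show 2 * k + 1 + 1 - (k + 1) = k + 1 by omega]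
    symm
    apply Nat.div_eq_of_eq_mul_left (by positivity)
    ring

/-- The number of pairs `(b, r)` of integers with `b ≥ 1`, `r ≥ 0`,
`r·d + b·p ≤ (p−1)(d+1)` and `r·d ≥ (b−1)(p−1)` equals `(p−1)(d+2)/4` if `d` is
even and `(p−1)(d+1)²/(4d)` if `d` is odd. -/
theorem stmt_11 (p d : ℕ) (hp : p.Prime) (hd : 0 < d) (hdvd : d ∣ p - 1) :
    Nat.card {x : ℤ × ℤ | 1 ≤ x.1 ∧ 0 ≤ x.2 ∧
        x.2 * d + x.1 * p ≤ ((p : ℤ) - 1) * ((d : ℤ) + 1) ∧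
        (x.1 - 1) * ((p : ℤ) - 1) ≤ x.2 * d} =
      if Even d then (p - 1) * (d + 2) / 4 else (p - 1) * (d + 1) ^ 2 / (4 * d) := by
  obtain ⟨γ, hγ⟩ := hdvd
  have hpZ : (p : ℤ) = d * γ + 1 := by
    have := hp.one_le
    omega
  have hset : {x : ℤ × ℤ | 1 ≤ x.1 ∧ 0 ≤ x.2 ∧
      x.2 * d + x.1 * p ≤ ((p : ℤ) - 1) * ((d : ℤ) + 1) ∧
      (x.1 - 1) * ((p : ℤ) - 1) ≤ x.2 * d} = Hfin γ d := by
    ext ⟨b, r⟩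
    exact (mem_Hfin_iff hd hpZ).symm
  rw [hset, card_Hfin, hγ, half_mul_sub_half_mul_eq d γ hd]
end
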